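/- For every seed set S ⊆ V, the worst-case expected number of influenced nodes outside S equals the value of the following linear program: min_θ∈Θ E_θ[R(c̃, S)] − |S| = min { Σ_{i ∈ V \ S} π_i : π : V → [0,1], π_i = 1 for all i ∈ S, and π_i − π_j ≤ 1 − p(i, j) for every edge (i, j) ∈ E }. -/

import Mathlib

open scoped BigOperators

namespace CorrIM

variable {V : Type*} [Fintype V] [DecidableEq V]

/-- A node `i` is influenced: `i ∈ S`, or `i` is reachable from some node of `S`
along the live edges of the scenario `c`. -/
def influenced (c : Finset (V × V)) (S : Finset V) (i : V) : Prop :=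
  ∃ s ∈ S, Relation.ReflTransGen (fun a b : V => (a, b) ∈ c) s i

/-- `R c S` : the number of influenced nodes in scenario `c` with seed set `S`. -/
noncomputable def R (c : Finset (V × V)) (S : Finset V) : ℕ :=
  Set.ncard {i : V | influenced c S i}

/-- The Fréchet class `Θ` : probability distributions on scenarios (subsets of `E`)
whose marginals agree with the edge likelihoods `p`. -/
def memTheta (E : Finset (V × V)) (p : V × V → ℝ) (θ : Finset (V × V) → ℝ) : Prop :=
  (∀ c, 0 ≤ θ c) ∧ (∀ c, θ c ≠ 0 → c ⊆ E) ∧ (∑ c : Finset (V × V), θ c) = 1 ∧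
    ∀ e ∈ E, (∑ c : Finset (V × V), if e ∈ c then θ c else 0) = p e

/-- Expected number of influenced nodes under the distribution `θ`. -/
noncomputable def expInf (θ : Finset (V × V) → ℝ) (S : Finset V) : ℝ :=
  ∑ c : Finset (V × V), θ c * (R c S : ℝ)

/-- The correlation robust influence function `f^corr`. -/
noncomputable def fcorr (E : Finset (V × V)) (p : V × V → ℝ) (S : Finset V) : ℝ :=
  sInf {x : ℝ | ∃ θ, memTheta E p θ ∧ x = expInf θ S}

open Classical in
/-- Probability of the event `A` under the distribution `θ`. -/
noncomputable def prob (θ : Finset (V × V) → ℝ) (A : Finset (V × V) → Prop) : ℝ :=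
  ∑ c : Finset (V × V), if A c then θ c else 0

/-- `γ` (a list of nodes `i₀, i₁, …, i_λ`, `λ ≥ 1`) is a directed path from the
seed set `S` to the node `i` using edges of `E`. -/
def IsPathFrom (E : Finset (V × V)) (S : Finset V) (i : V) (γ : List V) : Prop :=
  2 ≤ γ.length ∧ (∃ s ∈ S, γ.head? = some s) ∧ γ.getLast? = some i ∧
    γ.Chain' (fun a b : V => (a, b) ∈ E)

/-- The list of edges `(i₀,i₁), …, (i_{λ-1}, i_λ)` of a path `γ = [i₀, …, i_λ]`. -/
def pathEdges (γ : List V) : List (V × V) := γ.zip γ.tail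

/-- The weight `L(γ) = 1 - ∑_{l=1}^{λ} (1 - p(i_{l-1}, i_l))` of a path. -/
noncomputable def L (p : V × V → ℝ) (γ : List V) : ℝ :=
  1 - ((pathEdges γ).map (fun e => 1 - p e)).sum

/-- `π*_i = max(0, max_{γ ∈ Γ(S,i)} L(γ))`, with value `0` when `Γ(S,i) = ∅`. -/
noncomputable def piStar (E : Finset (V × V)) (p : V × V → ℝ) (S : Finset V) (i : V) : ℝ :=
  sSup (insert 0 {x : ℝ | ∃ γ : List V, IsPathFrom E S i γ ∧ x = L p γ})

/-- The independent cascade distribution `θ_ic` : each edge of `E` is live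
independently with probability `p e`. -/
noncomputable def thetaIC (E : Finset (V × V)) (p : V × V → ℝ) (c : Finset (V × V)) : ℝ :=
  if c ⊆ E then (∏ e ∈ c, p e) * ∏ e ∈ E \ c, (1 - p e) else 0

/-- The independent cascade influence function `f^ic`. -/
noncomputable def fic (E : Finset (V × V)) (p : V × V → ℝ) (S : Finset V) : ℝ :=
  expInf (thetaIC E p) S


/-- Feasibility for the linear program of Theorem 2:
`π : V → [0,1]`, `π i = 1` for `i ∈ S`, and `π i - π j ≤ 1 - p (i,j)` for `(i,j) ∈ E`. -/
def LPfeasible (E : Finset (V × V)) (p : V × V → ℝ) (S : Finset V) (x : V → ℝ) : Prop :=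
  (∀ i, 0 ≤ x i ∧ x i ≤ 1) ∧ (∀ i ∈ S, x i = 1) ∧ ∀ e ∈ E, x e.1 - x e.2 ≤ 1 - p e

/-! For `θ ∈ Θ`, the influence probabilities `π_i = P_θ(i is influenced)` are LP-feasible: an
influenced node `i` with a live edge `(i, j)` influences `j`, so `π_i - π_j` is at most the
probability `1 - p(i, j)` that the edge is dead. Hence `E_θ[R] - |S| = ∑_{i ∉ S} π_i` is at least
the value of the LP.

Conversely, a feasible `π` is realised (up to `≤`) by a coupling driven by a single uniform
`u ∈ [0, 1)`: the edge `(i, j)` is live iff `u` lies in the arc `[π_i, π_i + p(i, j))` of the circle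
`ℝ / ℤ`. Each edge is live with probability `p(i, j)`, and feasibility makes `u < π_i` propagate
along live edges, so `i` is influenced only if `u < π_i`. -/

open MeasureTheory

lemma sum_ite_measureReal_singleton {α : Type*} [Fintype α] [MeasurableSpace α]
    [MeasurableSingletonClass α] (μ : Measure α) [IsFiniteMeasure μ] (A : α → Prop)
    [DecidablePred A] : ∑ a, (if A a then μ.real {a} else 0) = μ.real {a | A a} := by
  rw [← Finset.sum_filter, sum_measureReal_singleton]
  simp

lemma sum_eq_card_add_sum_sdiff {f : V → ℝ} {S : Finset V} (hf : ∀ i ∈ S, f i = 1) :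
    ∑ i, f i = S.card + ∑ i ∈ Finset.univ \ S, f i := by
  rw [← Finset.sum_sdiff (Finset.subset_univ S), Finset.sum_congr rfl hf]
  simp [add_comm]

omit [Fintype V] [DecidableEq V] in
lemma lpFeasible_one {E : Finset (V × V)} {p : V × V → ℝ} (hp : ∀ e ∈ E, 0 ≤ p e ∧ p e ≤ 1)
    (S : Finset V) : LPfeasible E p S 1 :=
  ⟨fun _ => ⟨zero_le_one, le_rfl⟩, fun _ _ => rfl, fun e he => by simp [(hp e he).2]⟩

section Prob

omit [DecidableEq V]

variable {θ : Finset (V × V) → ℝ} {A B : Finset (V × V) → Prop}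

lemma prob_nonneg (hθ : ∀ c, 0 ≤ θ c) : 0 ≤ prob θ A :=
  Finset.sum_nonneg fun c _ => by split_ifs <;> simp [hθ c]

lemma prob_mono (hθ : ∀ c, 0 ≤ θ c) (h : ∀ c, A c → B c) : prob θ A ≤ prob θ B :=
  Finset.sum_le_sum fun c _ => by
    by_cases hA : A c
    · simp [hA, h c hA]
    · by_cases hB : B c <;> simp [hA, hB, hθ c]

lemma prob_or_le (hθ : ∀ c, 0 ≤ θ c) : prob θ (fun c => A c ∨ B c) ≤ prob θ A + prob θ B := by
  rw [prob, prob, prob, ← Finset.sum_add_distrib]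
  exact Finset.sum_le_sum fun c _ => by
    by_cases hA : A c <;> by_cases hB : B c <;> simp [hA, hB, hθ c]

lemma prob_add_prob_not : prob θ A + prob θ (fun c => ¬ A c) = ∑ c, θ c := by
  rw [prob, prob, ← Finset.sum_add_distrib]
  exact Finset.sum_congr rfl fun c _ => by by_cases hA : A c <;> simp [hA]

lemma prob_of_forall (h : ∀ c, A c) : prob θ A = ∑ c, θ c :=
  Finset.sum_congr rfl fun c _ => if_pos (h c)

lemma prob_measureReal_singleton (μ : Measure (Finset (V × V))) [IsFiniteMeasure μ] :
    prob (fun c => μ.real {c}) A = μ.real {c | A c} := by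
  classical
  exact sum_ite_measureReal_singleton μ A

lemma expInf_eq_sum_prob (S : Finset V) :
    expInf θ S = ∑ i, prob θ (fun c => influenced c S i) := by
  classical
  simp only [expInf, prob, R, Set.ncard_eq_toFinset_card', Set.toFinset_ofPred,
    Finset.card_filter, Nat.cast_sum, Finset.mul_sum]
  rw [Finset.sum_comm]
  exact Finset.sum_congr rfl fun i _ => Finset.sum_congr rfl fun c _ => by
    by_cases h : influenced c S i <;> simp [h]

end Prob

section LowerBound

variable {E : Finset (V × V)} {p : V × V → ℝ} {S : Finset V} {θ : Finset (V × V) → ℝ}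

omit [Fintype V] [DecidableEq V] in
lemma influenced_of_mem {c : Finset (V × V)} {i : V} (hi : i ∈ S) : influenced c S i :=
  ⟨i, hi, .refl⟩

omit [Fintype V] [DecidableEq V] in
lemma influenced.tail {c : Finset (V × V)} {i j : V} (hi : influenced c S i)
    (hij : (i, j) ∈ c) : influenced c S j :=
  let ⟨s, hs, hsi⟩ := hi
  ⟨s, hs, hsi.tail hij⟩

lemma prob_mem_of_memTheta (hθ : memTheta E p θ) {e : V × V} (he : e ∈ E) :
    prob θ (fun c => e ∈ c) = p e := by
  rw [← hθ.2.2.2 e he, prob]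
  exact Finset.sum_congr rfl fun c _ => by by_cases h : e ∈ c <;> simp [h]

lemma lpFeasible_prob_influenced (hθ : memTheta E p θ) :
    LPfeasible E p S (fun i => prob θ (fun c => influenced c S i)) := by
  have hθ0 := hθ.1
  have hθ1 := hθ.2.2.1
  have hle_one (A : Finset (V × V) → Prop) : prob θ A ≤ 1 :=
    ((prob_mono hθ0 fun _ _ => trivial).trans_eq (prob_of_forall fun _ => trivial)).trans_eq hθ1
  refine ⟨fun i => ⟨prob_nonneg hθ0, hle_one _⟩, fun i hi => ?_, fun ⟨i, j⟩ he => ?_⟩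
  · exact (prob_of_forall fun c => influenced_of_mem hi).trans hθ1
  · have hdead : prob θ (fun c => (i, j) ∉ c) = 1 - p (i, j) := by
      linarith [prob_add_prob_not (θ := θ) (A := fun c => (i, j) ∈ c), prob_mem_of_memTheta hθ he]
    have hcover : prob θ (fun c => influenced c S i) ≤
        prob θ (fun c => influenced c S j ∨ (i, j) ∉ c) :=
      prob_mono hθ0 fun c hi => (em ((i, j) ∈ c)).elim (fun h => .inl (hi.tail h)) .inr
    linarith [prob_or_le (A := fun c => influenced c S j) (B := fun c => (i, j) ∉ c) hθ0]

lemma expInf_eq_card_add_sum_prob (hθ : memTheta E p θ) :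
    expInf θ S = S.card + ∑ i ∈ Finset.univ \ S, prob θ (fun c => influenced c S i) := by
  rw [expInf_eq_sum_prob]
  exact sum_eq_card_add_sum_sdiff (lpFeasible_prob_influenced hθ).2.1

end LowerBound

lemma memTheta_measureReal_singleton {E : Finset (V × V)} {p : V × V → ℝ}
    (μ : Measure (Finset (V × V))) [IsProbabilityMeasure μ] (hE : ∀ᵐ c ∂μ, c ⊆ E)
    (hp : ∀ e ∈ E, μ.real {c | e ∈ c} = p e) : memTheta E p (fun c => μ.real {c}) := by
  refine ⟨fun c => measureReal_nonneg, fun c hc => ?_, ?_, fun e he => ?_⟩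
  · by_contra h
    exact hc ((measureReal_eq_zero_iff).2
      (measure_mono_null (Set.singleton_subset_iff.2 h) (ae_iff.1 hE)))
  · rw [sum_measureReal_singleton]
    simp
  · rw [sum_ite_measureReal_singleton, hp e he]

lemma volume_real_Ico_inter_arc {a q : ℝ} (ha : 0 ≤ a ∧ a ≤ 1) (hq : 0 ≤ q ∧ q ≤ 1) :
    volume.real (Set.Ico 0 1 ∩ (Set.Ico 0 (a + q - 1) ∪ Set.Ico a (a + q))) = q := by
  have hdisj : Disjoint (Set.Ico (0 : ℝ) (min 1 (a + q - 1))) (Set.Ico a (min 1 (a + q))) :=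
    Set.Ico_disjoint_Ico.2 <| (min_le_of_left_le (min_le_right _ _)).trans <|
      (show a + q - 1 ≤ a by linarith).trans (le_max_right _ _)
  rw [Set.inter_union_distrib_left, Set.Ico_inter_Ico, Set.Ico_inter_Ico, max_self,
    max_eq_right ha.1, measureReal_union hdisj measurableSet_Ico measure_Ico_lt_top.ne
    measure_Ico_lt_top.ne, Real.volume_real_Ico, Real.volume_real_Ico]
  simp only [max_def, min_def]
  split_ifs <;> linarith

section Coupling

variable (E : Finset (V × V)) (p : V × V → ℝ) (x : V → ℝ)

/-- Within `[0, 1)`, the arc `[x i, x i + p (i, j))` of `ℝ / ℤ`. -/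
def liveArc (e : V × V) : Set ℝ :=
  Set.Ico 0 (x e.1 + p e - 1) ∪ Set.Ico (x e.1) (x e.1 + p e)

open Classical in
noncomputable def liveEdges (u : ℝ) : Finset (V × V) :=
  E.filter fun e => u ∈ liveArc p x e

noncomputable def couplingMeasure : Measure (Finset (V × V)) :=
  (volume.restrict (Set.Ico 0 1)).map (liveEdges E p x)

omit [Fintype V] [DecidableEq V] in
lemma measurable_liveEdges : Measurable (liveEdges E p x) := by
  classical
  refine measurable_finset_iff.2 fun e => ?_
  simp only [liveEdges, Finset.mem_filter]
  exact measurable_const.and (measurableSet_Ico.union measurableSet_Ico).mem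

omit [Fintype V] [DecidableEq V] in
instance : IsProbabilityMeasure (couplingMeasure E p x) :=
  have : IsProbabilityMeasure (volume.restrict (Set.Ico (0 : ℝ) 1)) := ⟨by simp⟩
  Measure.isProbabilityMeasure_map (measurable_liveEdges E p x).aemeasurable

omit [DecidableEq V] in
lemma couplingMeasure_real_setOf (A : Finset (V × V) → Prop) :
    (couplingMeasure E p x).real {c | A c} =
      volume.real {u ∈ Set.Ico 0 1 | A (liveEdges E p x u)} := by
  rw [couplingMeasure, map_measureReal_apply (measurable_liveEdges E p x)
    (Set.toFinite _).measurableSet, measureReal_restrict_apply' measurableSet_Ico, Set.inter_comm]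
  rfl

variable {E p x} {S : Finset V}

lemma memTheta_couplingMeasure (hp : ∀ e ∈ E, 0 ≤ p e ∧ p e ≤ 1) (hx : LPfeasible E p S x) :
    memTheta E p (fun c => (couplingMeasure E p x).real {c}) := by
  classical
  refine memTheta_measureReal_singleton _ ?_ fun e he => ?_
  · exact (ae_map_iff (measurable_liveEdges E p x).aemeasurable (Set.toFinite _).measurableSet).2
      (ae_of_all _ fun u => Finset.filter_subset _ _)
  · rw [couplingMeasure_real_setOf, ← volume_real_Ico_inter_arc (hx.1 e.1) (hp e he)]
    congr 1
    ext u
    simp [liveEdges, liveArc, he]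

omit [Fintype V] [DecidableEq V] in
lemma lt_of_mem_liveEdges (hx : LPfeasible E p S x) {u : ℝ} {a b : V} (hu : u < x a)
    (hab : (a, b) ∈ liveEdges E p x u) : u < x b := by
  classical
  obtain ⟨hE, hlive | hlive⟩ := Finset.mem_filter.1 hab
  · linarith [hx.2.2 _ hE, hlive.2]
  · exact absurd hlive.1 (not_le.2 hu)

omit [Fintype V] [DecidableEq V] in
lemma lt_of_influenced_liveEdges (hx : LPfeasible E p S x) {u : ℝ} (hu : u < 1) {i : V}
    (h : influenced (liveEdges E p x u) S i) : u < x i := by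
  obtain ⟨s, hs, hsi⟩ := h
  induction hsi with
  | refl => rwa [hx.2.1 s hs]
  | tail _ hab ih => exact lt_of_mem_liveEdges hx ih hab

omit [DecidableEq V] in
lemma prob_couplingMeasure_influenced_le (hx : LPfeasible E p S x) (i : V) :
    prob (fun c => (couplingMeasure E p x).real {c}) (fun c => influenced c S i) ≤ x i := by
  rw [prob_measureReal_singleton, couplingMeasure_real_setOf]
  calc _ ≤ volume.real (Set.Ico 0 (x i)) :=
        measureReal_mono (fun u (hu : u ∈ {u ∈ Set.Ico 0 1 | _}) =>
          ⟨hu.1.1, lt_of_influenced_liveEdges hx hu.1.2 hu.2⟩) measure_Ico_lt_top.ne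
    _ = x i := by rw [Real.volume_real_Ico_of_le (hx.1 i).1, sub_zero]

lemma exists_memTheta_expInf_le (hp : ∀ e ∈ E, 0 ≤ p e ∧ p e ≤ 1) (hx : LPfeasible E p S x) :
    ∃ θ, memTheta E p θ ∧ expInf θ S ≤ S.card + ∑ i ∈ Finset.univ \ S, x i := by
  refine ⟨_, memTheta_couplingMeasure hp hx, ?_⟩
  rw [expInf_eq_sum_prob, ← sum_eq_card_add_sum_sdiff hx.2.1]
  exact Finset.sum_le_sum fun i _ => prob_couplingMeasure_influenced_le hx i

end Coupling

/-- `min_{θ ∈ Θ} E_θ[R(c̃, S)] - |S|` equals the value of the linear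
program `min { ∑_{i ∈ V \ S} π_i : π LP-feasible }`. -/
theorem fcorr_eq_LP (E : Finset (V × V)) (p : V × V → ℝ)
    (hp : ∀ e ∈ E, 0 ≤ p e ∧ p e ≤ 1) (S : Finset V) :
    fcorr E p S - (S.card : ℝ) =
      sInf {y : ℝ | ∃ x : V → ℝ, LPfeasible E p S x ∧ y = ∑ i ∈ Finset.univ \ S, x i} := by
  set LP := {y : ℝ | ∃ x : V → ℝ, LPfeasible E p S x ∧ y = ∑ i ∈ Finset.univ \ S, x i}
  have hne : LP.Nonempty := ⟨_, 1, lpFeasible_one hp S, rfl⟩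
  have hbdd : BddBelow LP := ⟨0, by
    rintro _ ⟨x, hx, rfl⟩
    exact Finset.sum_nonneg fun i _ => (hx.1 i).1⟩
  have hfcorr : fcorr E p S = sInf (OrderIso.addLeft (S.card : ℝ) '' LP) := by
    refine csInf_eq_csInf_of_forall_exists_le ?_ ?_
    · rintro _ ⟨θ, hθ, rfl⟩
      exact ⟨_, ⟨_, ⟨_, lpFeasible_prob_influenced hθ, rfl⟩, rfl⟩,
        (expInf_eq_card_add_sum_prob hθ).ge⟩
    · rintro _ ⟨_, ⟨x, hx, rfl⟩, rfl⟩
      obtain ⟨θ, hθ, hle⟩ := exists_memTheta_expInf_le hp hx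
      exact ⟨_, ⟨θ, hθ, rfl⟩, hle⟩
  rw [hfcorr, ← (OrderIso.addLeft _).map_csInf' hne hbdd, OrderIso.addLeft_apply,
    add_sub_cancel_left]

end CorrIM
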